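/- arXiv:2408.14226 — 9 statements merged into one kernel-verified Lean document; each statement's English description precedes it below -/
import Mathlib

section
/- The fixed point ᾱ of g* lies in the interval (0, 1]. -/
/-- the fixed point ᾱ of g* lies in (0,1]. -/
theorem abar_mem_Ioc (s i r a k : ℝ) (hs : 0 ≤ s) (hi : 0 < i) (hr : 0 < r)
    (ha : 0 < a) (ha1 : a ≤ 1) (hk : 0 < k) (abar : ℝ)
    (habar : abar = (s + i - a * r +
      Real.sqrt ((s + i - a * r) ^ 2 + 4 * (a * r) * (s + i + k * i))) /
      (2 * (s + i + k * i))) :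
    abar ∈ Set.Ioc (0:ℝ) 1 := by
  have hD : 0 < s + i + k * i := by positivity
  have hA : 0 < a * r := by positivity
  set b := s + i - a * r with hb
  set D := s + i + k * i with hDdef
  have hlt : -b < Real.sqrt (b ^ 2 + 4 * (a * r) * D) := by
    have h1 : Real.sqrt (b ^ 2) < Real.sqrt (b ^ 2 + 4 * (a * r) * D) := by
      apply Real.sqrt_lt_sqrt (by positivity)
      nlinarith
    rw [Real.sqrt_sq_eq_abs] at h1
    calc -b ≤ |b| := neg_le_abs b
      _ < _ := h1
  have hub : Real.sqrt (b ^ 2 + 4 * (a * r) * D) ≤ 2 * D - b := by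
    have h2 : 0 ≤ 2 * D - b := by simp only [hb, hDdef]; nlinarith
    have h3 : b ^ 2 + 4 * (a * r) * D ≤ (2 * D - b) ^ 2 := by
      have : a * r ≤ D - b := by simp only [hb, hDdef]; nlinarith
      nlinarith
    calc Real.sqrt (b ^ 2 + 4 * (a * r) * D) ≤ Real.sqrt ((2 * D - b) ^ 2) :=
        Real.sqrt_le_sqrt h3
      _ = |2 * D - b| := Real.sqrt_sq_eq_abs _
      _ = 2 * D - b := abs_of_nonneg h2
  constructor
  · rw [habar]
    apply div_pos (by linarith) (by linarith)
  · rw [habar, div_le_one (by linarith)]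
    linarith
end

section
/- Suppose ã > ᾱ, where ᾱ is the fixed point of g*. Then g*(ã) < ᾱ < ã; consequently, when all others play ã, the unconstrained utility maximizer g*(ã) lies strictly below ã, so an individual's best response u(g*(ã), ã) > u(ã, ã) and ã is not a Nash equilibrium action. -/
/-- Key concavity lemma: for `x₀ = 1/(1+G)` and `x ≠ x₀` positive,
`log x - x - x*G < log x₀ - x₀ - x₀*G`. -/
lemma log_concave_max (G x : ℝ) (hG : 0 ≤ G) (hx : 0 < x)
    (hne : x ≠ 1 / (1 + G)) :
    Real.log x - x - x * G <
      Real.log (1 / (1 + G)) - 1 / (1 + G) - (1 / (1 + G)) * G := by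
  have h1G : (0:ℝ) < 1 + G := by linarith
  set x0 : ℝ := 1 / (1 + G) with hx0def
  have hx0 : 0 < x0 := by positivity
  have hratio : 0 < x / x0 := by positivity
  have hrne : x / x0 ≠ 1 := by
    intro h
    exact hne (by field_simp at h; linarith)
  have hlog := Real.log_lt_sub_one_of_pos hratio hrne
  have hsplit : Real.log (x / x0) = Real.log x - Real.log x0 :=
    Real.log_div (ne_of_gt hx) (ne_of_gt hx0)
  have hxr : x / x0 = x * (1 + G) := by
    rw [hx0def]; field_simp
  have hx0e : x0 * (1 + G) = 1 := by
    rw [hx0def]; field_simp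
  rw [hsplit, hxr] at hlog
  nlinarith [hlog, hx0e]

/-- if ã > ᾱ (the fixed point of g*), then g*(ã) < ᾱ < ã and
u(g*(ã), ã) > u(ã, ã), so ã is not a Nash equilibrium action. -/
theorem tilde_not_NE_when_loose (s i r a k atil c : ℝ) (hs : 0 ≤ s) (hi : 0 < i)
    (hr : 0 < r) (ha : 0 < a) (ha1 : a ≤ 1) (hk : 0 < k) (hc : 0 < c)
    (hat : atil ∈ Set.Ioc (0:ℝ) 1) (g G : ℝ → ℝ)
    (hg : ∀ α, g α = (α * s + α * i + a * r) / (α * s + α * i + a * r + k * α * i))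
    (hG : ∀ α, G α = k * α * i / (α * s + α * i + a * r))
    (u : ℝ → ℝ → ℝ)
    (hu : ∀ α am, u α am =
      Real.log α - α + 1 - (if atil < α then c else 0) - α * G am)
    (abar : ℝ) (habar : abar ∈ Set.Ioc (0:ℝ) 1) (hfix : g abar = abar)
    (hlt : abar < atil) :
    g atil < abar ∧ abar < atil ∧ u (g atil) atil > u atil atil := by
  obtain ⟨hat0, hat1⟩ := hat
  obtain ⟨hab0, hab1⟩ := habar
  have hD : 0 < atil * s + atil * i + a * r := by positivity
  have hDb : 0 < abar * s + abar * i + a * r := by positivity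
  have hD2 : 0 < atil * s + atil * i + a * r + k * atil * i := by positivity
  have hDb2 : 0 < abar * s + abar * i + a * r + k * abar * i := by positivity
  -- g atil < abar
  have hgdec : g atil < abar := by
    rw [← hfix, hg, hg]
    rw [div_lt_div_iff₀ hD2 hDb2]
    nlinarith [mul_pos (mul_pos hk hi) (mul_pos ha hr), hlt]
  refine ⟨hgdec, hlt, ?_⟩
  -- identify g atil with 1/(1+G atil)
  have hGval : G atil = k * atil * i / (atil * s + atil * i + a * r) := hG atil
  have hGpos : 0 < G atil := by rw [hGval]; positivity
  have hge : g atil = 1 / (1 + G atil) := by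
    rw [hg, hGval]
    field_simp
  have hgpos : 0 < g atil := by
    rw [hg]; positivity
  have hne : atil ≠ 1 / (1 + G atil) := by
    rw [← hge]; intro h; linarith [hgdec, hlt, h.symm ▸ hlt]
  have key := log_concave_max (G atil) atil (le_of_lt hGpos) hat0 hne
  rw [← hge] at key
  rw [hu, hu]
  have h1 : ¬ atil < g atil := by linarith
  have h2 : ¬ atil < atil := lt_irrefl _
  rw [if_neg h1, if_neg h2]
  linarith
end

section
/- If ã < ᾱ, u(ᾱ, ᾱ) ≥ u(ã, ᾱ), then u(ã, ã) < u(g*(ã), ã). (Case 2 and Case 3 of the Nash equilibrium classification are mutually exclusive.) -/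
/-!
Write `β = G ã` and `B = G ᾱ`. Since `G` is increasing, `β < B`, and as `u(α, α⁻)` depends on `α⁻`
only through the term `-α G(α⁻)`, the gain `u(ᾱ, ·) - u(ã, ·)` of switching from `ã` to `ᾱ` is
strictly larger against `ã` than against `ᾱ`, where it is nonnegative by assumption. So `ᾱ` beats `ã`
against `ã`, and the best response `g*(ã) = 1/(1 + β)`, which maximises `log α - (1 + β) α` and pays
at most the same fixed cost `c`, does at least as well as `ᾱ`.
-/

open Real Set

lemma isMaxOn_log_sub_mul {m : ℝ} (hm : 0 < m) :
    IsMaxOn (fun x => log x - m * x) (Ioi 0) m⁻¹ := by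
  intro x (hx : 0 < x)
  have h := log_le_sub_one_of_pos (mul_pos hm hx)
  simp only [mem_ofPred_eq, log_inv, mul_inv_cancel₀ hm.ne']
  rw [log_mul hm.ne' hx.ne'] at h
  linarith

lemma mul_div_mul_add_lt_mul_div_mul_add {p q d x y : ℝ} (hp : 0 < p) (hq : 0 ≤ q) (hd : 0 < d)
    (hx : 0 ≤ x) (hxy : x < y) : p * x / (q * x + d) < p * y / (q * y + d) := by
  have hy : 0 ≤ y := hx.trans hxy.le
  rw [div_lt_div_iff₀ (by positivity) (by positivity)]
  nlinarith [mul_pos (mul_pos hp hd) (sub_pos.2 hxy)]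

theorem case2_excludes_case3_general (s i r a k atil c : ℝ) (hs : 0 ≤ s) (hi : 0 < i)
    (hr : 0 < r) (ha : 0 < a) (hk : 0 < k) (hc : 0 < c)
    (hat : atil ∈ Set.Ioo (0:ℝ) 1) (G gstar : ℝ → ℝ)
    (hG : ∀ α, G α = k * α * i / (α * s + α * i + a * r))
    (hgstar : ∀ α, gstar α = 1 / (1 + G α))
    (u : ℝ → ℝ → ℝ)
    (hu : ∀ α am, u α am =
      Real.log α - α + 1 - (if atil < α then c else 0) - α * G am)
    (abar : ℝ)
    (hlt : atil < abar) (hcase2 : u abar abar ≥ u atil abar) :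
    u atil atil < u (gstar atil) atil := by
  have hat0 : 0 < atil := hat.1
  have hG_nonneg : 0 ≤ G atil := by rw [hG]; positivity
  have hG_lt : G atil < G abar := by
    simp only [hG]
    convert mul_div_mul_add_lt_mul_div_mul_add (mul_pos hk hi) (add_nonneg hs hi.le)
      (mul_pos ha hr) hat0.le hlt using 1 <;> ring
  have hgain : u abar abar - u atil abar < u abar atil - u atil atil := by
    simp only [hu]
    linarith [mul_pos (sub_pos.2 hlt) (sub_pos.2 hG_lt)]
  have hbest : u abar atil ≤ u (gstar atil) atil := by
    have hmax := isMaxOn_log_sub_mul (show 0 < 1 + G atil by linarith) (hat0.trans hlt)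
    simp only [mem_ofPred_eq] at hmax
    simp only [hu, hgstar, one_div, if_pos hlt]
    split_ifs <;> linarith
  linarith

/-- if ã < ᾱ and u(ᾱ, ᾱ) ≥ u(ã, ᾱ), then u(ã, ã) < u(g*(ã), ã):
Case 2 and Case 3 of the Nash equilibrium classification are mutually exclusive. -/
theorem case2_excludes_case3 (s i r a k atil c : ℝ) (hs : 0 ≤ s) (hi : 0 < i)
    (hr : 0 < r) (ha : 0 < a) (ha1 : a ≤ 1) (hk : 0 < k) (hc : 0 < c)
    (hat : atil ∈ Set.Ioo (0:ℝ) 1) (G gstar : ℝ → ℝ)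
    (hG : ∀ α, G α = k * α * i / (α * s + α * i + a * r))
    (hgstar : ∀ α, gstar α = 1 / (1 + G α))
    (u : ℝ → ℝ → ℝ)
    (hu : ∀ α am, u α am =
      Real.log α - α + 1 - (if atil < α then c else 0) - α * G am)
    (abar : ℝ) (habar : abar ∈ Set.Ioc (0:ℝ) 1) (hfix : gstar abar = abar)
    (hlt : atil < abar) (hcase2 : u abar abar ≥ u atil abar) :
    u atil atil < u (gstar atil) atil :=
  case2_excludes_case3_general s i r a k atil c hs hi hr ha hk hc hat G gstar hG hgstar u hu abar
    hlt hcase2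
end

section
/- If ã < ᾱ and u(ã, ã) ≥ u(g*(ã), ã), then u(ᾱ, ᾱ) < u(ã, ᾱ). -/
/-- if ã < ᾱ and u(ã, ã) ≥ u(g*(ã), ã), then u(ᾱ, ᾱ) < u(ã, ᾱ). -/
theorem case3_excludes_case2 (s i r a k atil c : ℝ) (hs : 0 ≤ s) (hi : 0 < i)
    (hr : 0 < r) (ha : 0 < a) (ha1 : a ≤ 1) (hk : 0 < k) (hc : 0 < c)
    (hat : atil ∈ Set.Ioo (0:ℝ) 1) (G gstar : ℝ → ℝ)
    (hG : ∀ α, G α = k * α * i / (α * s + α * i + a * r))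
    (hgstar : ∀ α, gstar α = 1 / (1 + G α))
    (u : ℝ → ℝ → ℝ)
    (hu : ∀ α am, u α am =
      Real.log α - α + 1 - (if atil < α then c else 0) - α * G am)
    (abar : ℝ) (habar : abar ∈ Set.Ioc (0:ℝ) 1) (hfix : gstar abar = abar)
    (hlt : atil < abar) (hcase3 : u atil atil ≥ u (gstar atil) atil) :
    u abar abar < u atil abar := by
  obtain ⟨hat0, hat1⟩ := hat
  obtain ⟨hab0, hab1⟩ := habar
  have hGat : 0 ≤ G atil := by rw [hG]; positivity
  have hGab : 0 ≤ G abar := by rw [hG]; positivity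
  have hP : (0:ℝ) < 1 + G atil := by linarith
  have hQ : (0:ℝ) < 1 + G abar := by linarith
  have hPQ : G atil < G abar := by
    rw [hG, hG, div_lt_div_iff₀ (by positivity) (by positivity)]
    nlinarith [mul_pos (mul_pos hk hi) (mul_pos ha hr)]
  have hβ : gstar atil = 1 / (1 + G atil) := hgstar atil
  have hβ0 : 0 < gstar atil := by rw [hβ]; positivity
  have hβP : gstar atil * (1 + G atil) = 1 := by
    rw [hβ]; field_simp
  have habeq : abar = 1 / (1 + G abar) := ((hgstar abar).symm.trans hfix).symm
  have habQ : abar * (1 + G abar) = 1 := by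
    rw [eq_div_iff (ne_of_gt hQ)] at habeq; linarith [habeq]
  have hβab : abar < gstar atil := by
    have h2 : 1 / (1 + G abar) < 1 / (1 + G atil) :=
      one_div_lt_one_div_of_lt hP (by linarith)
    rw [hβ]; linarith [habeq ▸ h2]
  have hatβ : atil < gstar atil := lt_trans hlt hβab
  rw [hu, hu, if_pos hatβ, if_neg (lt_irrefl atil)] at hcase3
  rw [hu, hu, if_pos hlt, if_neg (lt_irrefl atil)]
  have hlogP : Real.log (gstar atil) + Real.log (1 + G atil) = 0 := by
    rw [← Real.log_mul (ne_of_gt hβ0) (ne_of_gt hP), hβP, Real.log_one]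
  have hB0 : Real.log (abar * (1 + G atil)) ≤ abar * (1 + G atil) - 1 :=
    Real.log_le_sub_one_of_pos (by positivity)
  rw [Real.log_mul (ne_of_gt hab0) (ne_of_gt hP)] at hB0
  have hC : atil * G abar - abar * G abar < atil * G atil - abar * G atil := by
    nlinarith
  nlinarith [hcase3, hB0, hC, hβP, habQ, hlogP]
end

section
/- Define U(α) = u(ã, α) − u(g*(α), α) for α with g*(α) > ã. Then U'(α) = G'(α)·(g*(α) − ã), so U is nondecreasing on any interval where g*(α) > ã. -/
/-!
Since g*(α) = 1/(1 + G(α)), the envelope identity g*·(1 + G) = 1 collapses `U` on the region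
g* > ã to `const + log (1 + G) − ã G`. Differentiating gives `G'/(1 + G) − ã G' = G'(g* − ã)`.
Monotonicity follows from concavity of `log`: for `G x ≤ G y`,
`log (1 + G x) − log (1 + G y) ≤ (G x − G y)/(1 + G y) ≤ ã (G x − G y)`, the last step because
`ã < g*(y) = 1/(1 + G y)`.
-/

open Real Filter Topology

section Hill

variable {s i r a k z : ℝ}

lemma hill_denom_pos (hs : 0 ≤ s) (hi : 0 < i) (har : 0 ≤ a * r) (hz : 0 < z) :
    0 < z * s + z * i + a * r := by
  have := mul_nonneg hz.le hs
  have := mul_pos hz hi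
  linarith

lemma hill_nonneg (hs : 0 ≤ s) (hi : 0 < i) (har : 0 ≤ a * r) (hk : 0 ≤ k) (hz : 0 < z) :
    0 ≤ k * z * i / (z * s + z * i + a * r) :=
  div_nonneg (mul_nonneg (mul_nonneg hk hz.le) hi.le) (hill_denom_pos hs hi har hz).le

lemma hill_le_hill (hs : 0 ≤ s) (hi : 0 < i) (har : 0 ≤ a * r) (hk : 0 ≤ k) {x y : ℝ}
    (hx : 0 < x) (hxy : x ≤ y) :
    k * x * i / (x * s + x * i + a * r) ≤ k * y * i / (y * s + y * i + a * r) := by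
  rw [div_le_div_iff₀ (hill_denom_pos hs hi har hx) (hill_denom_pos hs hi har (hx.trans_le hxy))]
  nlinarith [mul_nonneg (mul_nonneg (mul_nonneg hk hi.le) har) (sub_nonneg.2 hxy)]

lemma hill_differentiableAt (hs : 0 ≤ s) (hi : 0 < i) (har : 0 ≤ a * r) (hz : 0 < z) :
    DifferentiableAt ℝ (fun z => k * z * i / (z * s + z * i + a * r)) z :=
  DifferentiableAt.div (by fun_prop) (by fun_prop) (hill_denom_pos hs hi har hz).ne'

end Hill

lemma sub_envelope_eq (b c t : ℝ) (ht : 0 < 1 + t) :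
    (log b - b + 1 - 0 - b * t) - (log (1 / (1 + t)) - 1 / (1 + t) + 1 - c - 1 / (1 + t) * t)
      = (log b - b + 1 + c) + log (1 + t) - b * t := by
  rw [one_div, log_inv]
  field_simp
  ring

lemma deriv_eq_of_eventuallyEq_log_one_add {F G : ℝ → ℝ} {α b C : ℝ}
    (hG : DifferentiableAt ℝ G α) (hG1 : 1 + G α ≠ 0)
    (hF : F =ᶠ[𝓝 α] fun z => C + log (1 + G z) - b * G z) :
    deriv F α = deriv G α * (1 / (1 + G α) - b) := by
  have hderiv : HasDerivAt (fun z => C + log (1 + G z) - b * G z)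
      (deriv G α / (1 + G α) - b * deriv G α) α :=
    (((hG.hasDerivAt.const_add 1).log hG1).const_add C).sub (hG.hasDerivAt.const_mul b)
  rw [hF.deriv_eq, hderiv.deriv]
  ring

lemma log_one_add_sub_mul_le {b t t' : ℝ} (htt' : t ≤ t') (ht : 0 < 1 + t)
    (hb : b * (1 + t') < 1) :
    log (1 + t) - b * t ≤ log (1 + t') - b * t' := by
  have ht' : 0 < 1 + t' := by linarith
  have hconc : log (1 + t) - log (1 + t') ≤ (t - t') / (1 + t') := by
    have := log_le_sub_one_of_pos (div_pos ht ht')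
    rwa [log_div ht.ne' ht'.ne', div_sub_one ht'.ne', add_sub_add_left_eq_sub] at this
  have hslope : (t - t') / (1 + t') ≤ b * (t - t') := by
    rw [div_le_iff₀ ht']
    nlinarith [mul_nonneg (sub_nonneg.2 htt') (sub_nonneg.2 hb.le)]
  linarith

theorem U_deriv_and_monotone_general (s i r a k atil c : ℝ) (hs : 0 ≤ s) (hi : 0 < i)
    (hr : 0 < r) (ha : 0 < a) (hk : 0 < k)
    (G gstar : ℝ → ℝ)
    (hG : ∀ α, G α = k * α * i / (α * s + α * i + a * r))
    (hgstar : ∀ α, gstar α = 1 / (1 + G α))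
    (u : ℝ → ℝ → ℝ)
    (hu : ∀ α am, u α am =
      Real.log α - α + 1 - (if atil < α then c else 0) - α * G am)
    (U : ℝ → ℝ) (hU : ∀ α, U α = u atil α - u (gstar α) α) :
    (∀ α ∈ Set.Ioo (0:ℝ) 1, atil < gstar α →
        deriv U α = deriv G α * (gstar α - atil)) ∧
    (∀ x ∈ Set.Ioc (0:ℝ) 1, ∀ y ∈ Set.Ioc (0:ℝ) 1, x ≤ y →
        (∀ z ∈ Set.Icc x y, atil < gstar z) → U x ≤ U y) := by
  have har : 0 ≤ a * r := (mul_pos ha hr).le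
  have hG1 : ∀ z, 0 < z → 0 < 1 + G z := fun z hz => by
    linarith [hG z ▸ hill_nonneg hs hi har hk.le hz]
  have hUeq : ∀ z, 0 < z → atil < gstar z →
      U z = (log atil - atil + 1 + c) + log (1 + G z) - atil * G z := by
    intro z hz hgz
    rw [hU, hu, hu, if_neg (lt_irrefl atil), if_pos hgz, hgstar]
    exact sub_envelope_eq atil c (G z) (hG1 z hz)
  refine ⟨fun α ⟨hα0, _⟩ hgα => ?_, fun x ⟨hx0, _⟩ y _ hxy hall => ?_⟩
  · have hGd : DifferentiableAt ℝ G α := by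
      rw [funext hG]; exact hill_differentiableAt hs hi har hα0
    have hgc : ContinuousAt gstar α := by
      rw [funext hgstar]
      exact continuousAt_const.div (continuousAt_const.add hGd.continuousAt) (hG1 α hα0).ne'
    have hev : U =ᶠ[𝓝 α] fun z => (log atil - atil + 1 + c) + log (1 + G z) - atil * G z := by
      filter_upwards [hgc.eventually (eventually_gt_nhds hgα), eventually_gt_nhds hα0]
        with z hgz hz using hUeq z hz hgz
    rw [deriv_eq_of_eventuallyEq_log_one_add hGd (hG1 α hα0).ne' hev, hgstar]
  · have hgy := hall y ⟨hxy, le_rfl⟩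
    have hGxy : G x ≤ G y := by rw [hG, hG]; exact hill_le_hill hs hi har hk.le hx0 hxy
    rw [hgstar, lt_div_iff₀ (hG1 y (hx0.trans_le hxy))] at hgy
    rw [hUeq x hx0 (hall x ⟨le_rfl, hxy⟩), hUeq y (hx0.trans_le hxy) (hall y ⟨hxy, le_rfl⟩)]
    linarith [log_one_add_sub_mul_le hGxy (hG1 x hx0) hgy]

/-- with U(α) = u(ã, α) − u(g*(α), α) for α with g*(α) > ã,
U'(α) = G'(α)·(g*(α) − ã); hence U is nondecreasing on any interval where
g*(α) > ã. -/
theorem U_deriv_and_monotone (s i r a k atil c : ℝ) (hs : 0 ≤ s) (hi : 0 < i)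
    (hr : 0 < r) (ha : 0 < a) (ha1 : a ≤ 1) (hk : 0 < k) (hc : 0 < c)
    (hat : atil ∈ Set.Ioo (0:ℝ) 1) (G gstar : ℝ → ℝ)
    (hG : ∀ α, G α = k * α * i / (α * s + α * i + a * r))
    (hgstar : ∀ α, gstar α = 1 / (1 + G α))
    (u : ℝ → ℝ → ℝ)
    (hu : ∀ α am, u α am =
      Real.log α - α + 1 - (if atil < α then c else 0) - α * G am)
    (U : ℝ → ℝ) (hU : ∀ α, U α = u atil α - u (gstar α) α) :
    (∀ α ∈ Set.Ioo (0:ℝ) 1, atil < gstar α →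
        deriv U α = deriv G α * (gstar α - atil)) ∧
    (∀ x ∈ Set.Ioc (0:ℝ) 1, ∀ y ∈ Set.Ioc (0:ℝ) 1, x ≤ y →
        (∀ z ∈ Set.Icc x y, atil < gstar z) → U x ≤ U y) :=
  U_deriv_and_monotone_general s i r a k atil c hs hi hr ha hk G gstar hG hgstar u hu U hU
end

section
/- Suppose ã < ᾱ, u(ᾱ, ᾱ) < u(ã, ᾱ), and u(ã, ã) < u(g*(ã), ã). Then there exists α ∈ (ã, ᾱ) with u(ã, α) = u(g*(α), α) and α < g*(α). (Existence of a mixed Nash equilibrium in Case 4.) -/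
/-- existence of a mixed Nash equilibrium in Case 4: if ã < ᾱ,
u(ᾱ, ᾱ) < u(ã, ᾱ) and u(ã, ã) < u(g*(ã), ã), then there exists α ∈ (ã, ᾱ)
with u(ã, α) = u(g*(α), α) and α < g*(α). -/
theorem mixed_NE_exists (s i r a k atil c : ℝ) (hs : 0 ≤ s) (hi : 0 < i)
    (hr : 0 < r) (ha : 0 < a) (ha1 : a ≤ 1) (hk : 0 < k) (hc : 0 < c)
    (hat : atil ∈ Set.Ioo (0:ℝ) 1) (G gstar : ℝ → ℝ)
    (hG : ∀ α, G α = k * α * i / (α * s + α * i + a * r))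
    (hgstar : ∀ α, gstar α = 1 / (1 + G α))
    (u : ℝ → ℝ → ℝ)
    (hu : ∀ α am, u α am =
      Real.log α - α + 1 - (if atil < α then c else 0) - α * G am)
    (abar : ℝ) (habar : abar ∈ Set.Ioc (0:ℝ) 1) (hfix : gstar abar = abar)
    (hlt : atil < abar)
    (h1 : u abar abar < u atil abar)
    (h2 : u atil atil < u (gstar atil) atil) :
    ∃ α ∈ Set.Ioo atil abar, u atil α = u (gstar α) α ∧ α < gstar α := by
  obtain ⟨hat0, hat1⟩ := hat
  -- denominator positivity
  have hden : ∀ x : ℝ, 0 ≤ x → 0 < x * s + x * i + a * r := by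
    intro x hx
    have := mul_pos ha hr
    nlinarith [mul_nonneg hx hs, mul_nonneg hx hi.le]
  have hGnonneg : ∀ x : ℝ, 0 ≤ x → 0 ≤ G x := by
    intro x hx
    rw [hG]
    exact div_nonneg (by positivity) (hden x hx).le
  have hGmono : ∀ x y : ℝ, 0 ≤ x → x < y → G x < G y := by
    intro x y hx hxy
    rw [hG, hG]
    rw [div_lt_div_iff₀ (hden x hx) (hden y (by linarith))]
    nlinarith [mul_pos (mul_pos (mul_pos hk hi) (mul_pos ha hr)) (sub_pos.mpr hxy)]
  have h1G : ∀ x : ℝ, 0 ≤ x → 0 < 1 + G x := by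
    intro x hx; linarith [hGnonneg x hx]
  have hgpos : ∀ x : ℝ, 0 ≤ x → 0 < gstar x := by
    intro x hx; rw [hgstar]; exact div_pos one_pos (h1G x hx)
  have hganti : ∀ x y : ℝ, 0 ≤ x → x < y → gstar y < gstar x := by
    intro x y hx hxy
    rw [hgstar, hgstar]
    apply one_div_lt_one_div_of_lt (h1G x hx)
    linarith [hGmono x y hx hxy]
  -- on Icc atil abar, gstar α > atil
  have hgbig : ∀ x ∈ Set.Icc atil abar, atil < gstar x := by
    intro x hx
    rcases eq_or_lt_of_le hx.2 with h | h
    · rw [h, hfix]; exact hlt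
    · have := hganti x abar (by linarith [hx.1]) h
      rw [hfix] at this; linarith
  -- pointwise formula for U on Icc
  set V : ℝ → ℝ := fun α =>
    (Real.log atil - atil + 1 - atil * G α) -
    (Real.log (gstar α) - gstar α + 1 - c - gstar α * G α) with hV
  have hUV : ∀ x ∈ Set.Icc atil abar, u atil x - u (gstar x) x = V x := by
    intro x hx
    rw [hu, hu, if_neg (lt_irrefl atil), if_pos (hgbig x hx)]
    ring
  -- continuity
  have hGc : ContinuousOn G (Set.Icc atil abar) := by
    have hGeq : G = fun α => k * α * i / (α * s + α * i + a * r) := funext hG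
    rw [hGeq]
    apply ContinuousOn.div (by fun_prop) (by fun_prop)
    intro x hx
    exact (hden x (by linarith [hx.1])).ne'
  have hgc : ContinuousOn gstar (Set.Icc atil abar) := by
    have hgeq : gstar = fun α => 1 / (1 + G α) := funext hgstar
    rw [hgeq]
    apply ContinuousOn.div continuousOn_const (continuousOn_const.add hGc)
    intro x hx
    exact (h1G x (by linarith [hx.1])).ne'
  have hVc : ContinuousOn V (Set.Icc atil abar) := by
    rw [hV]
    apply ContinuousOn.sub
    · exact ((continuousOn_const.sub continuousOn_const).add continuousOn_const).sub
        (continuousOn_const.mul hGc)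
    · exact ((((ContinuousOn.log hgc
        (fun x hx => (hgpos x (by linarith [hx.1])).ne')).sub hgc).add
        continuousOn_const).sub continuousOn_const).sub (hgc.mul hGc)
  -- endpoint values
  have hVa : V atil < 0 := by
    have := hUV atil ⟨le_refl _, hlt.le⟩
    linarith [h2, this.symm.trans_lt (by linarith : u atil atil - u (gstar atil) atil < 0)]
  have hVb : 0 < V abar := by
    have h := hUV abar ⟨hlt.le, le_refl _⟩
    rw [hfix] at h
    linarith
  -- IVT
  have hsub := intermediate_value_Ioo hlt.le hVc
  have h0 : (0:ℝ) ∈ Set.Ioo (V atil) (V abar) := ⟨hVa, hVb⟩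
  obtain ⟨α, hα, hVα⟩ := hsub h0
  refine ⟨α, hα, ?_, ?_⟩
  · have := hUV α ⟨hα.1.le, hα.2.le⟩
    rw [hVα] at this
    linarith
  · have := hganti α abar (by linarith [hα.1]) hα.2
    rw [hfix] at this
    linarith [hα.2]
end

section
/- Under the conditions of Case 4 (ã < ᾱ, u(ᾱ,ᾱ) < u(ã,ᾱ), u(ã,ã) < u(g*(ã),ã)), the solution α ∈ (ã, ᾱ) of U(α) = 0, where U(α) = u(ã, α) − u(g*(α), α), is unique. -/
/-- uniqueness of the mixed Nash equilibrium in Case 4: the solution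
α ∈ (ã, ᾱ) of U(α) = 0, where U(α) = u(ã, α) − u(g*(α), α), is unique. -/
theorem mixed_NE_unique (s i r a k atil c : ℝ) (hs : 0 ≤ s) (hi : 0 < i)
    (hr : 0 < r) (ha : 0 < a) (ha1 : a ≤ 1) (hk : 0 < k) (hc : 0 < c)
    (hat : atil ∈ Set.Ioo (0:ℝ) 1) (G gstar : ℝ → ℝ)
    (hG : ∀ α, G α = k * α * i / (α * s + α * i + a * r))
    (hgstar : ∀ α, gstar α = 1 / (1 + G α))
    (u : ℝ → ℝ → ℝ)
    (hu : ∀ α am, u α am =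
      Real.log α - α + 1 - (if atil < α then c else 0) - α * G am)
    (U : ℝ → ℝ) (hU : ∀ α, U α = u atil α - u (gstar α) α)
    (abar : ℝ) (habar : abar ∈ Set.Ioc (0:ℝ) 1) (hfix : gstar abar = abar)
    (hlt : atil < abar)
    (h1 : u abar abar < u atil abar)
    (h2 : u atil atil < u (gstar atil) atil) :
    ∀ α₁ ∈ Set.Ioo atil abar, ∀ α₂ ∈ Set.Ioo atil abar,
      U α₁ = 0 → U α₂ = 0 → α₁ = α₂ := by
  obtain ⟨hat0, hat1⟩ := hat
  obtain ⟨habar0, habar1⟩ := habar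
  -- denominator positivity
  have hden : ∀ α : ℝ, 0 < α → 0 < α * s + α * i + a * r := by
    intro α hα; nlinarith [mul_pos ha hr, mul_pos hα hi, mul_nonneg hα.le hs]
  -- G positive on positives
  have hGpos : ∀ α : ℝ, 0 < α → 0 < G α := by
    intro α hα; rw [hG]
    exact div_pos (by positivity) (hden α hα)
  -- G strictly increasing
  have hGmono : ∀ x y : ℝ, 0 < x → x < y → G x < G y := by
    intro x y hx hxy
    have hy : 0 < y := hx.trans hxy
    rw [hG, hG, div_lt_div_iff₀ (hden x hx) (hden y hy)]
    nlinarith [mul_pos (mul_pos hk hi) (mul_pos ha hr), mul_pos hk hi,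
      mul_pos (mul_pos (mul_pos hk hi) (mul_pos ha hr)) (sub_pos.mpr hxy)]
  have hGb : 0 < G abar := hGpos abar habar0
  have hGb1 : (0:ℝ) < 1 + G abar := by linarith
  -- fixed point identity: abar * (1 + G abar) = 1
  have hfix' : abar * (1 + G abar) = 1 := by
    have := hfix
    rw [hgstar] at this
    field_simp at this
    linarith
  -- for α in the interval: atil * (1 + G α) < 1
  have hkey : ∀ α : ℝ, α ∈ Set.Ioo atil abar → atil * (1 + G α) < 1 := by
    intro α ⟨hα1, hα2⟩
    have hα0 : 0 < α := hat0.trans hα1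
    have hGlt : G α < G abar := hGmono α abar hα0 hα2
    have hGα : 0 < G α := hGpos α hα0
    nlinarith
  -- simplification of U on the interval
  have hUval : ∀ α : ℝ, α ∈ Set.Ioo atil abar →
      U α = Real.log atil - atil + 1 + c + (Real.log (1 + G α) - atil * G α) := by
    intro α hα
    have hα0 : 0 < α := hat0.trans hα.1
    have hGα : 0 < G α := hGpos α hα0
    have hGα1 : (0:ℝ) < 1 + G α := by linarith
    have hne : (1 : ℝ) + G α ≠ 0 := ne_of_gt hGα1
    have hind : atil < gstar α := by
      rw [hgstar, lt_div_iff₀ hGα1]; exact hkey α hα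
    rw [hU, hu, hu, hgstar]
    rw [if_neg (lt_irrefl atil), if_pos (by rwa [hgstar] at hind)]
    rw [one_div, Real.log_inv]
    field_simp
    ring
  -- strict monotonicity of U on the interval
  have hmono : ∀ x y : ℝ, x ∈ Set.Ioo atil abar → y ∈ Set.Ioo atil abar →
      x < y → U x < U y := by
    intro x y hx hy hxy
    have hx0 : 0 < x := hat0.trans hx.1
    set t1 := G x with ht1
    set t2 := G y with ht2
    have ht1p : 0 < t1 := hGpos x hx0
    have ht12 : t1 < t2 := hGmono x y hx0 hxy
    have ht2p : 0 < t2 := ht1p.trans ht12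
    have h1p : (0:ℝ) < 1 + t1 := by linarith
    have h2p : (0:ℝ) < 1 + t2 := by linarith
    have hky : atil * (1 + t2) < 1 := hkey y hy
    -- log lower bound: log((1+t1)/(1+t2)) < (1+t1)/(1+t2) - 1
    have hq : (0:ℝ) < (1 + t1) / (1 + t2) := div_pos h1p h2p
    have hqne : (1 + t1) / (1 + t2) ≠ 1 := by
      intro h
      have := (div_eq_one_iff_eq (ne_of_gt h2p)).mp h
      linarith
    have hlog := Real.log_lt_sub_one_of_pos hq hqne
    rw [Real.log_div (ne_of_gt h1p) (ne_of_gt h2p)] at hlog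
    have hd : (1 + t1) / (1 + t2) * (1 + t2) = 1 + t1 :=
      div_mul_cancel₀ _ (ne_of_gt h2p)
    have hmain : Real.log (1 + t2) - Real.log (1 + t1) > atil * (t2 - t1) := by
      nlinarith [mul_pos (sub_pos.mpr ht12) h2p,
        mul_lt_mul_of_pos_left hky (sub_pos.mpr ht12)]
    rw [hUval x hx, hUval y hy]
    linarith
  intro α₁ h₁ α₂ h₂ hU1 hU2
  rcases lt_trichotomy α₁ α₂ with h | h | h
  · exact absurd (hmono α₁ α₂ h₁ h₂ h) (by rw [hU1, hU2]; exact lt_irrefl 0)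
  · exact h
  · exact absurd (hmono α₂ α₁ h₂ h₁ h) (by rw [hU1, hU2]; exact lt_irrefl 0)
end

section
/- If ã ≥ ᾱ, then no mixed-strategy equilibrium exists: there is no α̂ ∈ (0,1] with g*(E[α̂]) > ã satisfying the mixed-equilibrium support condition (α̂ supported on {ã, g*(E[α̂])}), since for any m ∈ (0,1], g*(m) > ã ≥ ᾱ implies m < ᾱ ≤ ã, while m being a convex combination of ã and g*(m) (both ≥ ã) implies m ≥ ã, a contradiction. -/
/-- if ã ≥ ᾱ then no mixed-strategy equilibrium exists: there is no
mean m ∈ (0,1] with g*(m) > ã that is a convex combination m = p·ã + (1−p)·g*(m)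
with p ∈ (0,1). -/
theorem no_mixed_NE_when_loose (s i r a k atil : ℝ) (hs : 0 ≤ s) (hi : 0 < i)
    (hr : 0 < r) (ha : 0 < a) (ha1 : a ≤ 1) (hk : 0 < k)
    (hat : atil ∈ Set.Ioc (0:ℝ) 1) (G gstar : ℝ → ℝ)
    (hG : ∀ α, G α = k * α * i / (α * s + α * i + a * r))
    (hgstar : ∀ α, gstar α = 1 / (1 + G α))
    (abar : ℝ) (habar : abar ∈ Set.Ioc (0:ℝ) 1) (hfix : gstar abar = abar)
    (hge : atil ≥ abar) :
    ¬ ∃ m ∈ Set.Ioc (0:ℝ) 1, ∃ p ∈ Set.Ioo (0:ℝ) 1,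
        atil < gstar m ∧ m = p * atil + (1 - p) * gstar m := by
  rintro ⟨m, hm, p, hp, hlt, heq⟩
  obtain ⟨hm0, hm1⟩ := hm
  obtain ⟨hp0, hp1⟩ := hp
  -- m > atil
  have hmgt : atil < m := by
    have : atil = p * atil + (1 - p) * atil := by ring
    calc atil = p * atil + (1 - p) * atil := by ring
      _ < p * atil + (1 - p) * gstar m := by
          have := mul_lt_mul_of_pos_left hlt (by linarith : (0:ℝ) < 1 - p)
          linarith
      _ = m := heq.symm
  have habar0 := habar.1
  have hmab : abar < m := lt_of_le_of_lt hge hmgt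
  -- denominators positive
  have hdm : 0 < m * s + m * i + a * r := by positivity
  have hda : 0 < abar * s + abar * i + a * r := by positivity
  -- G abar < G m
  have hGlt : G abar < G m := by
    rw [hG, hG]
    rw [div_lt_div_iff₀ hda hdm]
    nlinarith [mul_pos hk hi, mul_pos ha hr, mul_pos (mul_pos hk hi) (mul_pos ha hr)]
  -- gstar m < gstar abar = abar
  have hG0 : 0 ≤ G abar := by
    rw [hG]; positivity
  have hglt : gstar m < gstar abar := by
    rw [hgstar, hgstar]
    apply one_div_lt_one_div_of_lt <;> linarith
  rw [hfix] at hglt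
  linarith
end

section
/- For fixed α⁻, the best response of a player in the social distancing game is either ã or g*(α⁻) (or a mixture of the two when they give equal utility): if g*(α⁻) ≤ ã then g*(α⁻) is the unique maximizer of u(·, α⁻) on (0,1]; if g*(α⁻) > ã then the maximum of u(·, α⁻) over (0,1] is max{u(ã, α⁻), u(g*(α⁻), α⁻)}. -/
/-!
With `b = 1 + G(α⁻) > 0`, the utility is `log α - b α + 1` minus the congestion penalty `c` above `ã`.
The concave part `log α - b α` has its strict maximum at `b⁻¹ = g*(α⁻)` (this is `log y ≤ y - 1` at
`y = b α`) and increases on `(0, b⁻¹]`. If `g* ≤ ã`, the maximizer carries no penalty and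
wins. If `ã < g*`, points below `ã` are beaten by `ã`, and points above `ã` carry the same penalty
as `g*` and are beaten by it.
-/

open Real

namespace LogSubMul

variable {b x y : ℝ}

theorem lt_of_ne_inv (hb : 0 < b) (hx : 0 < x) (hne : x ≠ b⁻¹) :
    log x - b * x < log b⁻¹ - b * b⁻¹ := by
  have hbx : b * x ≠ 1 := fun h => hne (eq_inv_of_mul_eq_one_right h)
  have hlog := log_lt_sub_one_of_pos (mul_pos hb hx) hbx
  rw [log_mul hb.ne' hx.ne'] at hlog
  rw [log_inv, mul_inv_cancel₀ hb.ne']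
  linarith

theorem le_of_le_of_le_inv (hb : 0 < b) (hx : 0 < x) (hxy : x ≤ y) (hy : y ≤ b⁻¹) :
    log x - b * x ≤ log y - b * y := by
  have hy0 : 0 < y := hx.trans_le hxy
  have hlog := log_le_sub_one_of_pos (div_pos hx hy0)
  rw [log_div hx.ne' hy0.ne'] at hlog
  -- `b ≤ 1 / y` turns the gap `1 - x / y = (y - x) / y` of the logarithms into at least `b (y - x)`
  have hby : b * y ≤ 1 := by
    calc b * y ≤ b * b⁻¹ := by gcongr
      _ = 1 := mul_inv_cancel₀ hb.ne'
  have hgap : b * (y - x) ≤ 1 - x / y := by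
    rw [one_sub_div hy0.ne', le_div_iff₀ hy0]
    nlinarith
  linarith

end LogSubMul

noncomputable def penalizedLogSubMul (b t c x : ℝ) : ℝ :=
  log x - b * x - if t < x then c else 0

section Penalized

variable {b t c x : ℝ}

theorem penalizedLogSubMul_lt_of_inv_le (hb : 0 < b) (hc : 0 ≤ c) (ht : b⁻¹ ≤ t) (hx : 0 < x)
    (hne : x ≠ b⁻¹) : penalizedLogSubMul b t c x < penalizedLogSubMul b t c b⁻¹ := by
  have hsmooth := LogSubMul.lt_of_ne_inv hb hx hne
  have hpenalty : (0 : ℝ) ≤ if t < x then c else 0 := by split_ifs <;> simp [hc]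
  simp only [penalizedLogSubMul, if_neg (not_lt.mpr ht)]
  linarith

theorem penalizedLogSubMul_le_max (hb : 0 < b) (htb : t < b⁻¹) (hx : 0 < x) :
    penalizedLogSubMul b t c x ≤
      max (penalizedLogSubMul b t c t) (penalizedLogSubMul b t c b⁻¹) := by
  rcases le_or_gt x t with hxt | htx
  · refine le_max_of_le_left ?_
    have := LogSubMul.le_of_le_of_le_inv hb hx hxt htb.le
    simp only [penalizedLogSubMul, if_neg (not_lt.mpr hxt), lt_irrefl, if_false]
    linarith
  · refine le_max_of_le_right ?_
    have hsmooth : log x - b * x ≤ log b⁻¹ - b * b⁻¹ := by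
      rcases eq_or_ne x b⁻¹ with rfl | hne
      · exact le_rfl
      · exact (LogSubMul.lt_of_ne_inv hb hx hne).le
    simp only [penalizedLogSubMul, if_pos htx, if_pos htb]
    linarith

end Penalized

theorem best_response_characterization_general (s i r a k atil c : ℝ) (hs : 0 ≤ s)
    (hi : 0 < i) (hr : 0 < r) (ha : 0 < a) (hk : 0 < k) (hc : 0 < c)
    (am : ℝ) (ham : am ∈ Set.Ioc (0:ℝ) 1)
    (G gstar : ℝ → ℝ)
    (hG : ∀ α, G α = k * α * i / (α * s + α * i + a * r))
    (hgstar : ∀ α, gstar α = 1 / (1 + G α))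
    (u : ℝ → ℝ → ℝ)
    (hu : ∀ α b, u α b =
      Real.log α - α + 1 - (if atil < α then c else 0) - α * G b) :
    (gstar am ≤ atil →
      ∀ α ∈ Set.Ioc (0:ℝ) 1, α ≠ gstar am → u α am < u (gstar am) am) ∧
    (atil < gstar am →
      ∀ α ∈ Set.Ioc (0:ℝ) 1, u α am ≤ max (u atil am) (u (gstar am) am)) := by
  have hGm : 0 ≤ G am := by rw [hG]; have := ham.1; positivity
  have hb : 0 < 1 + G am := by linarith
  have hg : gstar am = (1 + G am)⁻¹ := by rw [hgstar, one_div]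
  have hu' : ∀ α, u α am = penalizedLogSubMul (1 + G am) atil c α + 1 := fun α => by
    rw [hu, penalizedLogSubMul]; ring
  refine ⟨fun hle α hα hne => ?_, fun hlt α hα => ?_⟩
  · rw [hg] at hle hne ⊢
    simpa only [hu', add_lt_add_iff_right] using
      penalizedLogSubMul_lt_of_inv_le hb hc.le hle hα.1 hne
  · rw [hg] at hlt ⊢
    simpa only [hu', max_add_add_right, add_le_add_iff_right] using
      penalizedLogSubMul_le_max hb hlt hα.1

/-- for fixed α⁻, the best response is either ã or g*(α⁻): if
g*(α⁻) ≤ ã then g*(α⁻) is the unique maximizer of u(·, α⁻) on (0,1]; if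
g*(α⁻) > ã then the maximum of u(·, α⁻) over (0,1] is
max{u(ã, α⁻), u(g*(α⁻), α⁻)}. -/
theorem best_response_characterization (s i r a k atil c : ℝ) (hs : 0 ≤ s)
    (hi : 0 < i) (hr : 0 < r) (ha : 0 < a) (ha1 : a ≤ 1) (hk : 0 < k) (hc : 0 < c)
    (hat : atil ∈ Set.Ioo (0:ℝ) 1) (am : ℝ) (ham : am ∈ Set.Ioc (0:ℝ) 1)
    (G gstar : ℝ → ℝ)
    (hG : ∀ α, G α = k * α * i / (α * s + α * i + a * r))
    (hgstar : ∀ α, gstar α = 1 / (1 + G α))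
    (u : ℝ → ℝ → ℝ)
    (hu : ∀ α b, u α b =
      Real.log α - α + 1 - (if atil < α then c else 0) - α * G b) :
    (gstar am ≤ atil →
      ∀ α ∈ Set.Ioc (0:ℝ) 1, α ≠ gstar am → u α am < u (gstar am) am) ∧
    (atil < gstar am →
      ∀ α ∈ Set.Ioc (0:ℝ) 1, u α am ≤ max (u atil am) (u (gstar am) am)) :=
  best_response_characterization_general s i r a k atil c hs hi hr ha hk hc am ham G gstar hG hgstar
    u hu
end
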